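/- arXiv:1710.02793 — 4 statements merged into one kernel-verified Lean document; each statement's English description precedes it below -/
import Mathlib

section
/- Chapman–Robbins bound for orbit estimation: for any alternative parameter pair (x̃, ρ̃) with φ_x(x̃) ≠ x, the covariance of the aligned estimator satisfies Cov[φ_x(X̂)] ⪰ z z^T / χ²(f^N_{x̃,ρ̃} || f^N_{x,ρ}), where z = E_{x̃,ρ̃}[φ_x(X̂)] − E_{x,ρ}[φ_x(X̂)]. -/
/-!
Fix a direction `v` and put `g = ⟪v, φ⟫`. With `q` the true and `p` the alternative joint density,
the likelihood ratio `w = p / q - 1` has `E_q[(g - E_q g) w] = E_p g - E_q g` and `E_q[w²] = χ²`,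
so Cauchy–Schwarz in `L²(q)` gives `(E_p g - E_q g)² ≤ χ² Var_q g`. This is the quadratic form
of the claimed matrix inequality evaluated at `v`.
-/

open MeasureTheory

/-- The chi-squared divergence `χ²(f_A ‖ f_B) = E_B[(f_A(B)/f_B(B) - 1)²]`. -/
noncomputable def chiSq {α : Type*} [MeasureSpace α] (fA fB : α → ℝ) : ℝ :=
  ∫ y, (fA y / fB y - 1) ^ 2 * fB y

/-- The joint density of `N` i.i.d. samples with single-sample density `f`. -/
noncomputable def prodDensity {L : ℕ} (N : ℕ) (f : (Fin L → ℝ) → ℝ) :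
    (Fin N → Fin L → ℝ) → ℝ :=
  fun y => ∏ j, f (y j)

section WeightedIntegral

variable {α : Type*} [MeasurableSpace α] {μ : Measure α}

lemma integral_sub_mul_sq_mul {u w q : α → ℝ} (hu : Integrable (fun y => u y ^ 2 * q y) μ)
    (hw : Integrable (fun y => w y ^ 2 * q y) μ) (huw : Integrable (fun y => u y * w y * q y) μ)
    (t : ℝ) :
    ∫ y, (u y - t * w y) ^ 2 * q y ∂μ =
      (∫ y, w y ^ 2 * q y ∂μ) * (t * t) + (-2 * ∫ y, u y * w y * q y ∂μ) * t
        + ∫ y, u y ^ 2 * q y ∂μ := by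
  have hexp : (fun y => (u y - t * w y) ^ 2 * q y) =
      fun y => u y ^ 2 * q y - (2 * t) * (u y * w y * q y) + t ^ 2 * (w y ^ 2 * q y) := by
    funext y; ring
  have hsub : Integrable (fun y => u y ^ 2 * q y - (2 * t) * (u y * w y * q y)) μ :=
    hu.sub (huw.const_mul _)
  rw [hexp, integral_add hsub (hw.const_mul _), integral_sub hu (huw.const_mul _),
    integral_const_mul, integral_const_mul]
  ring

theorem sq_integral_mul_mul_le {u w q : α → ℝ} (hq : 0 ≤ᵐ[μ] q)
    (hu : Integrable (fun y => u y ^ 2 * q y) μ) (hw : Integrable (fun y => w y ^ 2 * q y) μ)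
    (huw : Integrable (fun y => u y * w y * q y) μ) :
    (∫ y, u y * w y * q y ∂μ) ^ 2 ≤ (∫ y, u y ^ 2 * q y ∂μ) * ∫ y, w y ^ 2 * q y ∂μ := by
  have hquad : ∀ t : ℝ, 0 ≤ (∫ y, w y ^ 2 * q y ∂μ) * (t * t)
      + (-2 * ∫ y, u y * w y * q y ∂μ) * t + ∫ y, u y ^ 2 * q y ∂μ := fun t => by
    rw [← integral_sub_mul_sq_mul hu hw huw]
    exact integral_nonneg_of_ae (hq.mono fun y hy => mul_nonneg (sq_nonneg _) hy)
  have hdisc := discrim_le_zero hquad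
  rw [discrim] at hdisc
  linarith

variable {ι : Type*} [Fintype ι]

lemma integrable_sum_mul_mul (v : ι → ℝ) {f : α → ι → ℝ} {w : α → ℝ}
    (h : ∀ i, Integrable (fun y => f y i * w y) μ) :
    Integrable (fun y => (∑ i, v i * f y i) * w y) μ := by
  simp only [Finset.sum_mul, mul_assoc]
  exact integrable_finsetSum _ fun i _ => (h i).const_mul (v i)

lemma integral_sum_mul_mul (v : ι → ℝ) {f : α → ι → ℝ} {w : α → ℝ}
    (h : ∀ i, Integrable (fun y => f y i * w y) μ) :
    ∫ y, (∑ i, v i * f y i) * w y ∂μ = ∑ i, v i * ∫ y, f y i * w y ∂μ := by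
  simp only [Finset.sum_mul, mul_assoc]
  rw [integral_finsetSum _ fun i _ => (h i).const_mul (v i)]
  simp only [integral_const_mul]

lemma sq_sum_mul (v x : ι → ℝ) :
    (∑ i, v i * x i) ^ 2 = ∑ k : ι × ι, (v k.1 * v k.2) * (x k.1 * x k.2) := by
  rw [sq, Finset.sum_mul_sum, Fintype.sum_prod_type]
  exact Finset.sum_congr rfl fun i _ => Finset.sum_congr rfl fun j _ => by ring

lemma integrable_sq_sum_mul_mul (v : ι → ℝ) {f : α → ι → ℝ} {w : α → ℝ}
    (h : ∀ i j, Integrable (fun y => f y i * f y j * w y) μ) :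
    Integrable (fun y => (∑ i, v i * f y i) ^ 2 * w y) μ := by
  simp only [sq_sum_mul]
  exact integrable_sum_mul_mul (fun k : ι × ι => v k.1 * v k.2) fun k => h k.1 k.2

lemma integral_sq_sum_mul_mul (v : ι → ℝ) {f : α → ι → ℝ} {w : α → ℝ}
    (h : ∀ i j, Integrable (fun y => f y i * f y j * w y) μ) :
    ∫ y, (∑ i, v i * f y i) ^ 2 * w y ∂μ
      = ∑ i, ∑ j, v i * v j * ∫ y, f y i * f y j * w y ∂μ := by
  simp only [sq_sum_mul]
  rw [integral_sum_mul_mul (fun k : ι × ι => v k.1 * v k.2) fun k => h k.1 k.2,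
    Fintype.sum_prod_type]

end WeightedIntegral

section ChapmanRobbins

variable {α : Type*} [MeasureSpace α] {p q g : α → ℝ}

theorem sq_integral_mul_sub_le_chiSq_mul (hq : ∀ᵐ y, 0 < q y) (hp1 : ∫ y, p y = 1)
    (hq1 : ∫ y, q y = 1) (hgp : Integrable fun y => g y * p y)
    (hgq : Integrable fun y => g y * q y) (hg2 : Integrable fun y => g y ^ 2 * q y)
    (hχ : Integrable fun y => (p y / q y - 1) ^ 2 * q y) :
    ((∫ y, g y * p y) - ∫ y, g y * q y) ^ 2
      ≤ chiSq p q * ((∫ y, g y ^ 2 * q y) - (∫ y, g y * q y) ^ 2) := by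
  set m := ∫ y, g y * q y
  have hp_int := integrable_of_integral_eq_one hp1
  have hq_int := integrable_of_integral_eq_one hq1
  have hvar_eq : (fun y => (g y - m) ^ 2 * q y)
      = fun y => g y ^ 2 * q y - 2 * m * (g y * q y) + m ^ 2 * q y := by
    funext y; ring
  have hvar_int : Integrable fun y => (g y - m) ^ 2 * q y := by
    rw [hvar_eq]; exact (hg2.sub (hgq.const_mul _)).add (hq_int.const_mul _)
  have hvar : ∫ y, (g y - m) ^ 2 * q y = (∫ y, g y ^ 2 * q y) - m ^ 2 := by
    have hsub : Integrable fun y => g y ^ 2 * q y - 2 * m * (g y * q y) :=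
      hg2.sub (hgq.const_mul _)
    rw [hvar_eq, integral_add hsub (hq_int.const_mul _), integral_sub hg2 (hgq.const_mul _),
      integral_const_mul, integral_const_mul, hq1]
    ring
  have hcov_eq : (fun y => (g y - m) * (p y / q y - 1) * q y)
      =ᵐ[volume] fun y => g y * p y - g y * q y - m * p y + m * q y := by
    filter_upwards [hq] with y hy
    field_simp
    ring
  have hcov_int : Integrable fun y => (g y - m) * (p y / q y - 1) * q y := by
    refine Integrable.congr ?_ hcov_eq.symm
    exact ((hgp.sub hgq).sub (hp_int.const_mul _)).add (hq_int.const_mul _)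
  have hcov : ∫ y, (g y - m) * (p y / q y - 1) * q y = (∫ y, g y * p y) - m := by
    have h1 : Integrable fun y => g y * p y - g y * q y := hgp.sub hgq
    have h2 : Integrable fun y => g y * p y - g y * q y - m * p y := h1.sub (hp_int.const_mul _)
    rw [integral_congr_ae hcov_eq, integral_add h2 (hq_int.const_mul _),
      integral_sub h1 (hp_int.const_mul _), integral_sub hgp hgq, integral_const_mul,
      integral_const_mul, hp1, hq1]
    ring
  have hcs := sq_integral_mul_mul_le (hq.mono fun y hy => hy.le) hvar_int hχ hcov_int
  rw [hcov, hvar] at hcs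
  rw [chiSq, mul_comm]
  exact hcs

end ChapmanRobbins

lemma prodDensity_pos {L N : ℕ} {f : (Fin L → ℝ) → ℝ} (hf : ∀ y, 0 < f y) (y) :
    0 < prodDensity N f y :=
  Finset.prod_pos fun j _ => hf (y j)

lemma integral_prodDensity {L : ℕ} (N : ℕ) (f : (Fin L → ℝ) → ℝ) :
    ∫ y, prodDensity N f y = (∫ y, f y) ^ N := by
  simpa [prodDensity] using integral_fintype_prod_volume_eq_pow (ι := Fin N) f

lemma Matrix.posSemidef_of_sum_mul_mul_nonneg {ι : Type*} [Fintype ι] {M : Matrix ι ι ℝ}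
    (hM : M.IsSymm) (h : ∀ v : ι → ℝ, 0 ≤ ∑ i, ∑ j, v i * v j * M i j) : M.PosSemidef := by
  refine .of_dotProduct_mulVec_nonneg (Matrix.isHermitian_iff_isSymm.mpr hM) fun v => ?_
  refine (h v).trans_eq ?_
  simp only [dotProduct, Matrix.mulVec, star_trivial, Finset.mul_sum]
  exact Finset.sum_congr rfl fun i _ => Finset.sum_congr rfl fun j _ => by ring

lemma Matrix.posSemidef_of_sq_sum_div_le {ι : Type*} [Fintype ι] {C : ι → ι → ℝ} {b z : ι → ℝ}
    {c : ℝ} (hC : ∀ i j, C i j = C j i)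
    (h : ∀ v : ι → ℝ,
      (∑ i, v i * z i) ^ 2 / c ≤ ∑ i, ∑ j, v i * v j * C i j - (∑ i, v i * b i) ^ 2) :
    (Matrix.of fun i j => C i j - b i * b j - z i * z j / c).PosSemidef := by
  refine Matrix.posSemidef_of_sum_mul_mul_nonneg
    (Matrix.IsSymm.ext fun i j => by simp only [Matrix.of_apply, hC i j]; ring) fun v => ?_
  have hexpand : ∑ i, ∑ j, v i * v j * (C i j - b i * b j - z i * z j / c)
      = ∑ i, ∑ j, v i * v j * C i j - (∑ i, v i * b i) ^ 2 - (∑ i, v i * z i) ^ 2 / c := by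
    rw [sq, Finset.sum_mul_sum, sq, Finset.sum_mul_sum]
    simp only [Finset.sum_div, ← Finset.sum_sub_distrib]
    exact Finset.sum_congr rfl fun i _ => Finset.sum_congr rfl fun j _ => by ring
  simp only [Matrix.of_apply, hexpand]
  linarith [h v]

theorem stmt_1_general (L N : ℕ) (fA fB : (Fin L → ℝ) → ℝ)
    (hB0 : ∀ y, 0 < fB y)
    (hA1 : ∫ y, fA y = 1) (hB1 : ∫ y, fB y = 1)
    (φ : (Fin N → Fin L → ℝ) → Fin L → ℝ)
    (hint2 : ∀ i i', Integrable (fun y => φ y i * φ y i' * prodDensity N fB y))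
    (hintA : ∀ i, Integrable (fun y => φ y i * prodDensity N fA y))
    (hintB : ∀ i, Integrable (fun y => φ y i * prodDensity N fB y))
    (hχ : 0 < chiSq (prodDensity N fA) (prodDensity N fB)) :
    Matrix.PosSemidef (Matrix.of fun i i' : Fin L =>
      -- Cov[φ_x(X̂)]_{i i'} minus (z zᵀ / χ²)_{i i'}
      ((∫ y, φ y i * φ y i' * prodDensity N fB y)
          - (∫ y, φ y i * prodDensity N fB y) * (∫ y, φ y i' * prodDensity N fB y))
        - ((∫ y, φ y i * prodDensity N fA y) - (∫ y, φ y i * prodDensity N fB y))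
            * ((∫ y, φ y i' * prodDensity N fA y) - (∫ y, φ y i' * prodDensity N fB y))
            / chiSq (prodDensity N fA) (prodDensity N fB)) := by
  refine Matrix.posSemidef_of_sq_sum_div_le (fun i j => by simp only [mul_comm (φ _ i)])
    fun v => ?_
  have key := sq_integral_mul_sub_le_chiSq_mul (g := fun y => ∑ i, v i * φ y i)
    (.of_forall (prodDensity_pos hB0)) (by rw [integral_prodDensity, hA1, one_pow])
    (by rw [integral_prodDensity, hB1, one_pow]) (integrable_sum_mul_mul v hintA)
    (integrable_sum_mul_mul v hintB) (integrable_sq_sum_mul_mul v hint2)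
    (.of_integral_ne_zero hχ.ne')
  rw [integral_sum_mul_mul v hintA, integral_sum_mul_mul v hintB,
    integral_sq_sum_mul_mul v hint2] at key
  simp only [mul_sub, Finset.sum_sub_distrib]
  rwa [div_le_iff₀' hχ]

/-- Chapman–Robbins bound for orbit estimation.  `fB` is the single-sample
density `f_{x,ρ}` of the true parameters, `fA` the density `f_{x̃,ρ̃}` of an
alternative pair, and `φ` is the aligned estimator `φ_x(X̂)` as a function of
the `N` observations.  Writing `z_i = E_{x̃,ρ̃}[φ_x(X̂)_i] - E_{x,ρ}[φ_x(X̂)_i]`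
and `Cov` for the covariance matrix of `φ_x(X̂)` under the true parameters,
we have `Cov ⪰ z zᵀ / χ²(f^N_{x̃,ρ̃} ‖ f^N_{x,ρ})`. -/
theorem stmt_1 (L N : ℕ) (fA fB : (Fin L → ℝ) → ℝ)
    (hA0 : ∀ y, 0 ≤ fA y) (hB0 : ∀ y, 0 < fB y)
    (hA1 : ∫ y, fA y = 1) (hB1 : ∫ y, fB y = 1)
    (φ : (Fin N → Fin L → ℝ) → Fin L → ℝ)
    (hint2 : ∀ i i', Integrable (fun y => φ y i * φ y i' * prodDensity N fB y))
    (hintA : ∀ i, Integrable (fun y => φ y i * prodDensity N fA y))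
    (hintB : ∀ i, Integrable (fun y => φ y i * prodDensity N fB y))
    (hχ : 0 < chiSq (prodDensity N fA) (prodDensity N fB)) :
    Matrix.PosSemidef (Matrix.of fun i i' : Fin L =>
      -- Cov[φ_x(X̂)]_{i i'} minus (z zᵀ / χ²)_{i i'}
      ((∫ y, φ y i * φ y i' * prodDensity N fB y)
          - (∫ y, φ y i * prodDensity N fB y) * (∫ y, φ y i' * prodDensity N fB y))
        - ((∫ y, φ y i * prodDensity N fA y) - (∫ y, φ y i * prodDensity N fB y))
            * ((∫ y, φ y i' * prodDensity N fA y) - (∫ y, φ y i' * prodDensity N fB y))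
            / chiSq (prodDensity N fA) (prodDensity N fB)) :=
  stmt_1_general L N fA fB hB0 hA1 hB1 φ hint2 hintA hintB hχ
end

section
/- In the Fourier domain, the conjugated second moment satisfies F M² F^{-1} = (1/L) D_{Fx} C_{Fρ} D_{conj(Fx)}; in particular, the k-th diagonal entry of F M² F^{-1} equals (1/L)·|（Fx)[k]|², so the power spectrum of x satisfies P_x = L · diag(F M² F^{-1}). -/
open Matrix

/-- The discrete Fourier transform `(Fx)[k] = Σ_i x[i] e^{-2πι k i / L}`. -/
noncomputable def dft {L : ℕ} [NeZero L] (x : ZMod L → ℂ) (k : ZMod L) : ℂ :=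
  ∑ i : ZMod L, x i *
    Complex.exp (-(2 * (Real.pi : ℂ) * Complex.I * (k.val : ℂ) * (i.val : ℂ)) / (L : ℂ))

/-- The DFT of a real signal. -/
noncomputable def dftR {L : ℕ} [NeZero L] (x : ZMod L → ℝ) (k : ZMod L) : ℂ :=
  dft (fun i => (x i : ℂ)) k

/-!
Write `M² = Σ_s ρ_s u_s u_sᵀ` with `u_s = x(· - s)` the `s`-th column of `C_x`. Conjugating a
rank-one matrix by the (symmetric) DFT matrix gives `F (u vᵀ) F⁻¹ = (F u)(F⁻¹ v)ᵀ`. By the shift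
theorem `F u_s = e(-s·) Fx`, and since `x` is real, `F⁻¹ u_s = (1/L) e(s·) conj(Fx)`. Summing over
`s` against `ρ` collects the characters into `(Fρ)[k - l]`, the `(k, l)` entry of `C_{Fρ}`; on the
diagonal this is `(Fρ)[0] = Σ ρ = 1`.
-/

open Complex ComplexConjugate
open scoped ZMod

lemma LinearEquiv.inv_toMatrix' {n R : Type*} [Fintype n] [DecidableEq n] [CommRing R]
    (e : (n → R) ≃ₗ[R] n → R) :
    (LinearMap.toMatrix' e.toLinearMap)⁻¹ = LinearMap.toMatrix' e.symm.toLinearMap := by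
  refine inv_eq_right_inv ?_
  rw [← LinearMap.toMatrix'_comp, e.comp_symm, LinearMap.toMatrix'_id]

namespace ZMod

variable {N : ℕ} [NeZero N]

lemma stdAddChar_neg_eq_conj (a : ZMod N) : stdAddChar (-a) = conj (stdAddChar a) := by
  rw [stdAddChar_apply, stdAddChar_apply, AddChar.map_neg_eq_inv, Circle.coe_inv_eq_conj]

lemma stdAddChar_neg_mul_eq_exp (i k : ZMod N) :
    stdAddChar (-(i * k)) = exp (-(2 * Real.pi * I * k.val * i.val) / N) := by
  have : -(i * k) = Int.cast (-(k.val * i.val : ℤ)) := by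
    push_cast
    simp [mul_comm]
  rw [this, stdAddChar_coe]
  push_cast
  ring_nf

lemma dft_comp_sub_const {E : Type*} [AddCommGroup E] [Module ℂ E]
    (Φ : ZMod N → E) (s k : ZMod N) :
    𝓕 (fun j ↦ Φ (j - s)) k = stdAddChar (-(s * k)) • 𝓕 Φ k := by
  rw [dft_apply, dft_apply, Finset.smul_sum]
  refine Fintype.sum_equiv (Equiv.subRight s) _ _ fun j ↦ ?_
  rw [smul_smul, ← AddChar.map_add_eq_mul, Equiv.subRight_apply]
  congr 2
  ring

lemma dft_conj_neg (Φ : ZMod N → ℂ) (k : ZMod N) :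
    𝓕 (fun j ↦ conj (Φ j)) (-k) = conj (𝓕 Φ k) := by
  simp only [dft_apply, map_sum, smul_eq_mul, map_mul, ← stdAddChar_neg_eq_conj, mul_neg, neg_neg]

lemma invDFT_ofReal (u : ZMod N → ℝ) (k : ZMod N) :
    𝓕⁻ (fun j ↦ (u j : ℂ)) k = (N : ℂ)⁻¹ * conj (𝓕 (fun j ↦ (u j : ℂ)) k) := by
  rw [invDFT_apply', smul_eq_mul, ← dft_conj_neg]
  simp only [conj_ofReal]

noncomputable def dftMatrix (N : ℕ) [NeZero N] : Matrix (ZMod N) (ZMod N) ℂ :=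
  LinearMap.toMatrix' (𝓕 : (ZMod N → ℂ) ≃ₗ[ℂ] _).toLinearMap

lemma dftMatrix_apply (k j : ZMod N) : dftMatrix N k j = stdAddChar (-(j * k)) := by
  simp [dftMatrix, dft_apply, Pi.single_apply]

lemma dftMatrix_isSymm : (dftMatrix N).IsSymm := by
  ext k j
  simp only [transpose_apply, dftMatrix_apply, mul_comm]

lemma inv_dftMatrix :
    (dftMatrix N)⁻¹ = LinearMap.toMatrix' (𝓕 : (ZMod N → ℂ) ≃ₗ[ℂ] _).symm.toLinearMap :=
  LinearEquiv.inv_toMatrix' _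

lemma dftMatrix_mul_vecMulVec_mul_inv (u v : ZMod N → ℂ) :
    dftMatrix N * vecMulVec u v * (dftMatrix N)⁻¹ = vecMulVec (𝓕 u) (𝓕⁻ v) := by
  rw [mul_vecMulVec, vecMulVec_mul, ← mulVec_transpose, dftMatrix_isSymm.inv.eq, inv_dftMatrix,
    dftMatrix, LinearMap.toMatrix'_mulVec, LinearMap.toMatrix'_mulVec]
  rfl

lemma of_exp_eq_dftMatrix :
    (of fun k i : ZMod N ↦ exp (-(2 * (Real.pi : ℂ) * I * (k.val : ℂ) * (i.val : ℂ)) / (N : ℂ)))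
      = dftMatrix N := by
  ext k i
  rw [of_apply, dftMatrix_apply, stdAddChar_neg_mul_eq_exp]

end ZMod

lemma dft_eq_zmod_dft {N : ℕ} [NeZero N] (x : ZMod N → ℂ) : dft x = 𝓕 x := by
  ext k
  refine Finset.sum_congr rfl fun i _ ↦ ?_
  rw [ZMod.stdAddChar_neg_mul_eq_exp, smul_eq_mul, mul_comm]

lemma dftR_eq_zmod_dft {N : ℕ} [NeZero N] (x : ZMod N → ℝ) :
    dftR x = 𝓕 (fun i ↦ (x i : ℂ)) :=
  funext fun k ↦ congrFun (dft_eq_zmod_dft _) k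

section SecondMoment

variable {N : ℕ} [NeZero N]

/-- `M² = C_x D_ρ C_xᵀ`, with `(C_x)_{i s} = x[i - s]`. -/
noncomputable def secondMoment (x ρ : ZMod N → ℝ) : Matrix (ZMod N) (ZMod N) ℂ :=
  of fun i j ↦ ((∑ s, ρ s * (x (i - s) * x (j - s)) : ℝ) : ℂ)

lemma secondMoment_eq_sum_vecMulVec (x ρ : ZMod N → ℝ) :
    secondMoment x ρ =
      ∑ s, (ρ s : ℂ) • vecMulVec (fun i ↦ (x (i - s) : ℂ)) (fun i ↦ (x (i - s) : ℂ)) := by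
  ext i j
  simp [secondMoment, Matrix.sum_apply, vecMulVec_apply]

open ZMod in
lemma dftMatrix_mul_secondMoment_mul_inv_apply (x ρ : ZMod N → ℝ) (k l : ZMod N) :
    (dftMatrix N * secondMoment x ρ * (dftMatrix N)⁻¹) k l
      = (N : ℂ)⁻¹ * (𝓕 (fun i ↦ (x i : ℂ)) k * 𝓕 (fun i ↦ (ρ i : ℂ)) (k - l)
          * conj (𝓕 (fun i ↦ (x i : ℂ)) l)) := by
  rw [secondMoment_eq_sum_vecMulVec, Finset.mul_sum, Finset.sum_mul, Matrix.sum_apply,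
    dft_apply (fun i ↦ (ρ i : ℂ)), Finset.mul_sum, Finset.sum_mul, Finset.mul_sum]
  refine Finset.sum_congr rfl fun s _ ↦ ?_
  have hshift := dft_comp_sub_const (fun j ↦ (x j : ℂ)) s
  have hchar : stdAddChar (-(s * (k - l))) = stdAddChar (-(s * k)) * stdAddChar (s * l) := by
    rw [← AddChar.map_add_eq_mul]
    ring_nf
  rw [mul_smul_comm, smul_mul_assoc, dftMatrix_mul_vecMulVec_mul_inv, Matrix.smul_apply,
    vecMulVec_apply, invDFT_ofReal (fun j ↦ x (j - s)), hshift, hshift]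
  simp only [smul_eq_mul]
  rw [map_mul, ← stdAddChar_neg_eq_conj, neg_neg, hchar]
  ring

end SecondMoment

theorem stmt_4_general (L : ℕ) [NeZero L] (x ρ : ZMod L → ℝ)
    (hρ1 : ∑ s, ρ s = 1) :
    (Matrix.of fun k i : ZMod L =>
        Complex.exp (-(2 * (Real.pi : ℂ) * Complex.I * (k.val : ℂ) * (i.val : ℂ)) / (L : ℂ)))
      * (Matrix.of fun i j : ZMod L => ((∑ s, ρ s * (x (i - s) * x (j - s)) : ℝ) : ℂ))
      * (Matrix.of fun k i : ZMod L =>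
          Complex.exp (-(2 * (Real.pi : ℂ) * Complex.I * (k.val : ℂ) * (i.val : ℂ)) / (L : ℂ)))⁻¹
    = ((L : ℂ))⁻¹ •
        (Matrix.diagonal (dftR x) * Matrix.circulant (dftR ρ)
          * Matrix.diagonal (fun k => starRingEnd ℂ (dftR x k)))
    ∧ ∀ k : ZMod L,
        ((‖dftR x k‖ ^ 2 : ℝ) : ℂ)
          = (L : ℂ) *
            ((Matrix.of fun k i : ZMod L =>
                Complex.exp (-(2 * (Real.pi : ℂ) * Complex.I * (k.val : ℂ) * (i.val : ℂ)) / (L : ℂ)))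
              * (Matrix.of fun i j : ZMod L => ((∑ s, ρ s * (x (i - s) * x (j - s)) : ℝ) : ℂ))
              * (Matrix.of fun k i : ZMod L =>
                  Complex.exp (-(2 * (Real.pi : ℂ) * Complex.I * (k.val : ℂ) * (i.val : ℂ)) / (L : ℂ)))⁻¹) k k := by
  rw [ZMod.of_exp_eq_dftMatrix, ← secondMoment.eq_def, dftR_eq_zmod_dft, dftR_eq_zmod_dft]
  have hρ : 𝓕 (fun i ↦ (ρ i : ℂ)) 0 = 1 := by
    rw [ZMod.dft_apply_zero]
    exact_mod_cast hρ1
  refine ⟨?_, fun k ↦ ?_⟩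
  · ext k l
    rw [dftMatrix_mul_secondMoment_mul_inv_apply, Matrix.smul_apply, mul_diagonal, diagonal_mul,
      circulant_apply, smul_eq_mul]
  · rw [dftMatrix_mul_secondMoment_mul_inv_apply, sub_self, hρ, mul_one, mul_conj',
      mul_inv_cancel_left₀ (NeZero.ne _), ofReal_pow]

/-- In the Fourier domain, the conjugated second moment satisfies
`F M² F⁻¹ = (1/L) D_{Fx} C_{Fρ} D_{conj(Fx)}`; in particular the `k`-th diagonal
entry of `F M² F⁻¹` equals `(1/L)|(Fx)[k]|²`, so the power spectrum satisfies
`P_x = L · diag(F M² F⁻¹)`. -/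
theorem stmt_4 (L : ℕ) [NeZero L] (x ρ : ZMod L → ℝ)
    (hρ0 : ∀ s, 0 ≤ ρ s) (hρ1 : ∑ s, ρ s = 1) :
    (Matrix.of fun k i : ZMod L =>
        Complex.exp (-(2 * (Real.pi : ℂ) * Complex.I * (k.val : ℂ) * (i.val : ℂ)) / (L : ℂ)))
      * (Matrix.of fun i j : ZMod L => ((∑ s, ρ s * (x (i - s) * x (j - s)) : ℝ) : ℂ))
      * (Matrix.of fun k i : ZMod L =>
          Complex.exp (-(2 * (Real.pi : ℂ) * Complex.I * (k.val : ℂ) * (i.val : ℂ)) / (L : ℂ)))⁻¹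
    = ((L : ℂ))⁻¹ •
        (Matrix.diagonal (dftR x) * Matrix.circulant (dftR ρ)
          * Matrix.diagonal (fun k => starRingEnd ℂ (dftR x k)))
    ∧ ∀ k : ZMod L,
        ((‖dftR x k‖ ^ 2 : ℝ) : ℂ)
          = (L : ℂ) *
            ((Matrix.of fun k i : ZMod L =>
                Complex.exp (-(2 * (Real.pi : ℂ) * Complex.I * (k.val : ℂ) * (i.val : ℂ)) / (L : ℂ)))
              * (Matrix.of fun i j : ZMod L => ((∑ s, ρ s * (x (i - s) * x (j - s)) : ℝ) : ℂ))
              * (Matrix.of fun k i : ZMod L =>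
                  Complex.exp (-(2 * (Real.pi : ℂ) * Complex.I * (k.val : ℂ) * (i.val : ℂ)) / (L : ℂ)))⁻¹) k k :=
  stmt_4_general L x ρ hρ1
end

section
/- If ρ is an aperiodic distribution on ℤ_L and θ is drawn from an absolutely continuous probability measure on the simplex Δ^L, then with probability 1 all L entries of the circular convolution ρ ∗ θ are pairwise distinct. -/
open MeasureTheory

/-! The difference of two entries of `ρ ∗ θ` is a linear form in `θ`, with coefficients
`k ↦ ρ (i - k) - ρ (j - k)`; these vanish identically only if `ρ` is invariant under the shift
by `j - i`. So for an aperiodic `ρ` each coincidence `(ρ ∗ θ) i = (ρ ∗ θ) j` confines `θ` to a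
proper hyperplane, which is null, and there are finitely many pairs `i ≠ j`. -/

/-- A distribution on `ℤ_L` is aperiodic if no nonzero shift leaves it invariant. -/
def Aperiodic {L : ℕ} (ρ : ZMod L → ℝ) : Prop :=
  ¬ ∃ ℓ : ZMod L, ℓ ≠ 0 ∧ ∀ k, ρ (k + ℓ) = ρ k

theorem Fintype.sum_mul_comp_sub_left {G R : Type*} [AddCommGroup G] [Fintype G]
    [NonUnitalNonAssocSemiring R] (ρ θ : G → R) (i : G) :
    ∑ ℓ, ρ ℓ * θ (i - ℓ) = ∑ k, ρ (i - k) * θ k :=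
  Fintype.sum_equiv (Equiv.subLeft i) _ _ fun ℓ => by simp

theorem Aperiodic.comp_sub_left_ne {L : ℕ} {ρ : ZMod L → ℝ} (haper : Aperiodic ρ)
    {i j : ZMod L} (hij : i ≠ j) : (fun k => ρ (i - k)) ≠ fun k => ρ (j - k) := by
  intro h
  refine haper ⟨j - i, sub_ne_zero.mpr hij.symm, fun k => ?_⟩
  have hk := congrFun h (i - k)
  simp only [sub_sub_cancel] at hk
  rw [hk]
  ring_nf

theorem convolution_eq_iff_sum_mul_eq_zero {G R : Type*} [AddCommGroup G] [Fintype G]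
    [NonUnitalNonAssocRing R] (ρ θ : G → R) (i j : G) :
    (∑ ℓ, ρ ℓ * θ (i - ℓ)) = ∑ ℓ, ρ ℓ * θ (j - ℓ) ↔
      ∑ k, (ρ (i - k) - ρ (j - k)) * θ k = 0 := by
  simp only [sub_mul, Finset.sum_sub_distrib, Fintype.sum_mul_comp_sub_left, sub_eq_zero]

theorem stmt_7_general (L : ℕ) [NeZero L] (ρ : ZMod L → ℝ)
    (haper : Aperiodic ρ)
    (μ : Measure (ZMod L → ℝ))
    (hac : ∀ c : ZMod L → ℝ, c ≠ 0 → μ {θ | ∑ i, c i * θ i = 0} = 0) :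
    μ {θ | ∃ i j : ZMod L, i ≠ j ∧
        (∑ ℓ, ρ ℓ * θ (i - ℓ)) = ∑ ℓ, ρ ℓ * θ (j - ℓ)} = 0 := by
  simp only [Set.ofPred_exists]
  refine measure_iUnion_null fun i => measure_iUnion_null fun j => ?_
  by_cases hij : i = j
  · simp [hij]
  have hc : (fun k => ρ (i - k) - ρ (j - k)) ≠ 0 := fun h =>
    haper.comp_sub_left_ne hij (funext fun k => sub_eq_zero.mp (congrFun h k))
  refine measure_mono_null (fun θ hθ => ?_) (hac _ hc)
  exact (convolution_eq_iff_sum_mul_eq_zero ρ θ i j).mp hθ.2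

/-- If `ρ` is an aperiodic distribution and `θ` is drawn from an absolutely
continuous probability measure `μ` on the simplex (formalized by: `μ` lives on
the simplex and assigns measure zero to every proper linear hyperplane), then
with probability 1 all entries of the circular convolution `ρ ∗ θ` are
pairwise distinct. -/
theorem stmt_7 (L : ℕ) [NeZero L] (ρ : ZMod L → ℝ)
    (hρ0 : ∀ s, 0 ≤ ρ s) (hρ1 : ∑ s, ρ s = 1)
    (haper : Aperiodic ρ)
    (μ : Measure (ZMod L → ℝ)) [IsProbabilityMeasure μ]
    (hsupp : ∀ᵐ θ ∂μ, (∀ i, 0 ≤ θ i) ∧ ∑ i, θ i = 1)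
    (hac : ∀ c : ZMod L → ℝ, c ≠ 0 → μ {θ | ∑ i, c i * θ i = 0} = 0) :
    μ {θ | ∃ i j : ZMod L, i ≠ j ∧
        (∑ ℓ, ρ ℓ * θ (i - ℓ)) = ∑ ℓ, ρ ℓ * θ (j - ℓ)} = 0 :=
  stmt_7_general L ρ haper μ hac
end

section
/- Fourier-ratio propagation lemma: suppose r : ℤ_L → ℂ satisfies |r[k]| = 1 for all k, r[0] = 1, and there are indices m₁,…,m_n ⊆ ℤ_L with gcd(m₁,…,m_n, L) = 1 and unit complex numbers ω̃₁,…,ω̃_n such that r[p + m_j] = ω̃_j · r[p] for all p and j. Then there exists an L-th root of unity ω with r[m] = ω^m for all m ∈ ℤ_L. -/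
/-!
Taking `p = 0` in `r (p + mⱼ) = ω̃ⱼ r p` gives `ω̃ⱼ = r mⱼ`, so `r (p + s) = r s * r p` holds
for `s = mⱼ`. The shifts `s` with this property form an additive submonoid of `ℤ_L`, hence an
ideal; it contains every `mⱼ`, so by Bézout it contains the unit `gcd(m₁,…,m_n)` and is
everything. Thus `r` is an additive character of `ℤ_L`, so `r k = r 1 ^ k` and
`r 1 ^ L = r 0 = 1`.
-/

open Finset

theorem Ideal.natCast_finset_gcd_mem {R ι : Type*} [CommRing R] (I : Ideal R) (s : Finset ι)
    (f : ι → ℕ) (hf : ∀ i ∈ s, (f i : R) ∈ I) : ((s.gcd f : ℕ) : R) ∈ I := by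
  classical
  induction s using Finset.induction with
  | empty => simp
  | insert a s _ ih =>
    have hbezout := congrArg (Int.cast : ℤ → R) (Nat.gcd_eq_gcd_ab (f a) (s.gcd f))
    push_cast at hbezout
    rw [Finset.gcd_insert, show GCDMonoid.gcd (f a) (s.gcd f) = Nat.gcd (f a) (s.gcd f) from rfl,
      hbezout]
    exact I.add_mem (I.mul_mem_right _ (hf a (mem_insert_self a s)))
      (I.mul_mem_right _ (ih fun i hi => hf i (mem_insert_of_mem hi)))

namespace ZMod

variable {L : ℕ} [NeZero L]

theorem ideal_eq_top_of_coprime_gcd_val {ι : Type*} (s : Finset ι) (m : ι → ZMod L)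
    {I : Ideal (ZMod L)} (hm : ∀ j ∈ s, m j ∈ I)
    (hgcd : (s.gcd fun j => (m j).val).Coprime L) : I = ⊤ :=
  I.eq_top_of_isUnit_mem (I.natCast_finset_gcd_mem s _ fun j hj => by simpa using hm j hj)
    ((isUnit_iff_coprime _ _).2 hgcd)

/-- Multiplication in `ZMod L` is iterated addition, so additive submonoids are ideals. -/
def idealOfAddSubmonoid (S : AddSubmonoid (ZMod L)) : Ideal (ZMod L) where
  toAddSubmonoid := S
  smul_mem' c x hx := by
    rw [smul_eq_mul, ← natCast_zmod_val c, ← nsmul_eq_mul]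
    exact S.nsmul_mem hx _

end ZMod

section MultiplicativeShifts

variable {G M : Type*} [AddMonoid G] [Monoid M]

def multiplicativeShifts (f : G → M) (h0 : f 0 = 1) : AddSubmonoid G where
  carrier := {s | ∀ p, f (p + s) = f s * f p}
  zero_mem' p := by simp [h0]
  add_mem' {x y} hx hy p := by
    rw [← add_assoc, hy, hx, hy x, mul_assoc]

theorem mem_multiplicativeShifts {f : G → M} {h0 : f 0 = 1} {s : G} (c : M)
    (hs : ∀ p, f (p + s) = c * f p) : s ∈ multiplicativeShifts f h0 := by
  have hc : f s = c := by rw [← zero_add s, hs, h0, mul_one]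
  intro p
  rw [hs, hc]

end MultiplicativeShifts

namespace AddChar

variable {L : ℕ} {M : Type*} [Monoid M] (ψ : AddChar (ZMod L) M)

theorem zmod_map_one_pow_eq_one : ψ 1 ^ L = 1 := by
  rw [← ψ.map_nsmul_eq_pow, nsmul_one, ZMod.natCast_self, ψ.map_zero_eq_one]

theorem zmod_apply_eq_pow_val [NeZero L] (k : ZMod L) : ψ k = ψ 1 ^ k.val := by
  rw [← ψ.map_nsmul_eq_pow, nsmul_one, ZMod.natCast_zmod_val]

end AddChar

theorem stmt_16_general (L n : ℕ) [NeZero L] (r : ZMod L → ℂ)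
    (hr0 : r 0 = 1)
    (m : Fin n → ZMod L) (ω' : Fin n → ℂ)
    (hgcd : Nat.gcd (Finset.univ.gcd fun j => (m j).val) L = 1)
    (hrec : ∀ (p : ZMod L) (j : Fin n), r (p + m j) = ω' j * r p) :
    ∃ ω : ℂ, ω ^ L = 1 ∧ ∀ k : ZMod L, r k = ω ^ k.val := by
  have htop : ZMod.idealOfAddSubmonoid (multiplicativeShifts r hr0) = ⊤ :=
    ZMod.ideal_eq_top_of_coprime_gcd_val univ m
      (fun j _ => mem_multiplicativeShifts (h0 := hr0) (ω' j) (hrec · j)) hgcd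
  have hadd (a b : ZMod L) : r (a + b) = r a * r b := by
    have hb : b ∈ ZMod.idealOfAddSubmonoid (multiplicativeShifts r hr0) :=
      htop ▸ Submodule.mem_top
    exact (hb a).trans (mul_comm _ _)
  let ψ : AddChar (ZMod L) ℂ := ⟨r, hr0, hadd⟩
  exact ⟨ψ 1, ψ.zmod_map_one_pow_eq_one, ψ.zmod_apply_eq_pow_val⟩

/-- Fourier-ratio propagation lemma: if `r : ℤ_L → ℂ` has unit modulus,
`r[0] = 1`, and there are indices `m₁,…,m_n` with `gcd(m₁,…,m_n, L) = 1` and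
unit complex numbers `ω̃ⱼ` such that `r[p + mⱼ] = ω̃ⱼ r[p]` for all `p, j`,
then `r[m] = ω^m` for some `L`-th root of unity `ω`. -/
theorem stmt_16 (L n : ℕ) [NeZero L] (r : ZMod L → ℂ)
    (hr1 : ∀ k, ‖r k‖ = 1) (hr0 : r 0 = 1)
    (m : Fin n → ZMod L) (ω' : Fin n → ℂ)
    (hω : ∀ j, ‖ω' j‖ = 1)
    (hgcd : Nat.gcd (Finset.univ.gcd fun j => (m j).val) L = 1)
    (hrec : ∀ (p : ZMod L) (j : Fin n), r (p + m j) = ω' j * r p) :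
    ∃ ω : ℂ, ω ^ L = 1 ∧ ∀ k : ZMod L, r k = ω ^ k.val :=
  stmt_16_general L n r hr0 m ω' hgcd hrec
end
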